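/- arXiv:2103.10349 — 5 statements merged into one kernel-verified Lean document; each statement's English description precedes it below -/
import Mathlib

section
/- If A and B are sets of positive integers with counting functions satisfying A(N) ≤ (a + o(1))N^α and B(N) ≤ (b + o(1))N^β as N → ∞ (where 0 < α, β < 1 and a, b > 0), then the number of pairs (x, y) ∈ A × B with x + y ≤ N is at most ((a·b·α·β·Γ(α)Γ(β))/((α+β)Γ(α+β)) + o(1))·N^(α+β) as N → ∞. -/
/-!
Counting pairs by their second coordinate gives `∑_{y ∈ B, y ≤ N} A(N - y)`. For `a' > a`, `b' > b`
we have `A(t) ≤ a' t^α + C₁` and `B(t) ≤ b' t^β + C₂` for all `t`. Bounding `A(N - y)` this way and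
summing by parts against `B` leaves the main term `a' b' ∑_{k < N} k^β ((N - k)^α - (N - k - 1)^α)`,
a lower Riemann-type sum for
`a' b' ∫₀^N t^β α (N - t)^(α-1) dt = a' b' α Γ(β+1) Γ(α) / Γ(α+β+1) N^(α+β)`,
while the constants only contribute `O(N^α + N^β + 1) = o(N^(α+β))`.
-/

open Real MeasureTheory Finset Filter Topology Asymptotics

noncomputable def countingFn (S : Set ℕ) (n : ℕ) : ℕ := (S ∩ Set.Icc 1 n).ncard

lemma countingFn_mono (S : Set ℕ) : Monotone (countingFn S) := fun _ _ h =>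
  Set.ncard_le_ncard (Set.inter_subset_inter_right S (Set.Icc_subset_Icc_right h))
    ((Set.finite_Icc _ _).inter_of_right S)

lemma countingFn_eq_card_filter {S : Set ℕ} [DecidablePred (· ∈ S)] (hS : 0 ∉ S) (n : ℕ) :
    countingFn S n = #{k ∈ range (n + 1) | k ∈ S} := by
  rw [countingFn, ← Set.ncard_coe_finset]
  congr 1
  ext k
  have hpos : k ∈ S → k ≠ 0 := fun hk h => hS (h ▸ hk)
  simp only [Set.mem_inter_iff, Set.mem_Icc, coe_filter, mem_range, Set.mem_ofPred_eq]
  grind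

lemma countingFn_eq_sum_indicator {S : Set ℕ} (hS : 0 ∉ S) (n : ℕ) :
    (countingFn S n : ℝ) = ∑ k ∈ range (n + 1), S.indicator 1 k := by
  classical
  rw [countingFn_eq_card_filter hS, sum_indicator_eq_sum_filter]
  simp

lemma sum_indicator_le {S : Set ℕ} (hS : 0 ∉ S) {g φ : ℕ → ℝ} (hg : Antitone g) {N : ℕ}
    (hgN : 0 ≤ g N) (hφ : ∀ k, (countingFn S k : ℝ) ≤ φ k) :
    ∑ y ∈ range (N + 1), S.indicator g y
      ≤ ∑ k ∈ range N, φ k * (g k - g (k + 1)) + φ N * g N := by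
  have hparts := sum_range_by_parts g (S.indicator (1 : ℕ → ℝ)) (N + 1)
  simp only [smul_eq_mul, ← Set.indicator_mul_right, Pi.one_apply, mul_one,
    add_tsub_cancel_right, ← countingFn_eq_sum_indicator hS] at hparts
  rw [hparts, sub_eq_neg_add, ← sum_neg_distrib, mul_comm (g N)]
  gcongr with k
  · rw [← neg_mul, neg_sub, mul_comm]
    exact mul_le_mul_of_nonneg_right (hφ k) (sub_nonneg.2 (hg k.le_succ))
  · exact hφ N

lemma ncard_pairs_eq_sum {A B : Set ℕ} (hA : 0 ∉ A) (N : ℕ) :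
    ({p : ℕ × ℕ | p.1 ∈ A ∧ p.2 ∈ B ∧ p.1 + p.2 ≤ N}.ncard : ℝ)
      = ∑ y ∈ range (N + 1), B.indicator (fun y => (countingFn A (N - y) : ℝ)) y := by
  classical
  have hset : {p : ℕ × ℕ | p.1 ∈ A ∧ p.2 ∈ B ∧ p.1 + p.2 ≤ N}
      = ↑({y ∈ range (N + 1) | y ∈ B}.biUnion
          fun y => {x ∈ range (N - y + 1) | x ∈ A} ×ˢ {y}) := by
    ext ⟨x, y⟩
    simp only [Set.mem_ofPred_eq, coe_biUnion, coe_filter, mem_range, Set.mem_iUnion,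
      coe_product, coe_singleton, Set.mem_prod, Set.mem_singleton_iff, exists_prop]
    grind
  rw [hset, Set.ncard_coe_finset, card_biUnion, sum_indicator_eq_sum_filter]
  · push_cast
    refine sum_congr rfl fun y _ => ?_
    rw [card_product, card_singleton, mul_one, countingFn_eq_card_filter hA]
  · intro y _ z _ hyz
    simp only [Function.onFun, disjoint_left, mem_product, mem_singleton]
    grind

lemma intervalIntegrable_mul_sub_rpow {α : ℝ} (hα : 0 < α) (c x y : ℝ) :
    IntervalIntegrable (fun t => α * (c - t) ^ (α - 1)) volume x y := by
  have h := (intervalIntegral.intervalIntegrable_rpow' (a := c - x) (b := c - y) (r := α - 1)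
    (by linarith)).comp_sub_left c
  simp only [sub_sub_cancel] at h
  exact h.const_mul α

lemma integral_mul_sub_rpow {α : ℝ} (hα : 0 < α) (c x y : ℝ) :
    ∫ t in x..y, α * (c - t) ^ (α - 1) = (c - x) ^ α - (c - y) ^ α := by
  rw [intervalIntegral.integral_const_mul,
    intervalIntegral.integral_comp_sub_left (fun t => t ^ (α - 1)),
    integral_rpow (Or.inl (by linarith)), sub_add_cancel]
  field_simp

lemma sum_rpow_mul_sub_rpow_le_integral {α β : ℝ} (hα : 0 < α) (hβ : 0 ≤ β) (N : ℕ) :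
    ∑ k ∈ range N, (k : ℝ) ^ β * (((N - k : ℕ) : ℝ) ^ α - ((N - (k + 1) : ℕ) : ℝ) ^ α)
      ≤ ∫ t in (0 : ℝ)..N, t ^ β * (α * (N - t) ^ (α - 1)) := by
  have hint : ∀ x y : ℝ,
      IntervalIntegrable (fun t => t ^ β * (α * (N - t) ^ (α - 1))) volume x y :=
    fun x y => (intervalIntegrable_mul_sub_rpow hα N x y).continuousOn_mul
      (continuous_rpow_const hβ).continuousOn
  have hsum := intervalIntegral.sum_integral_adjacent_intervals
    (a := fun k : ℕ => (k : ℝ)) (n := N) fun k _ => hint _ _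
  simp only [Nat.cast_zero] at hsum
  rw [← hsum]
  refine sum_le_sum fun k hk => ?_
  have hkN : k + 1 ≤ N := mem_range.1 hk
  have hkN' : (k : ℝ) + 1 ≤ N := by exact_mod_cast hkN
  rw [Nat.cast_sub (by omega), Nat.cast_sub hkN, Nat.cast_succ,
    ← integral_mul_sub_rpow hα, ← intervalIntegral.integral_const_mul]
  refine intervalIntegral.integral_mono_on (by linarith)
    ((intervalIntegrable_mul_sub_rpow hα _ _ _).const_mul _) (hint _ _) fun t ht => ?_
  have hk0 : (0 : ℝ) ≤ k := k.cast_nonneg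
  gcongr
  · exact mul_nonneg hα.le (rpow_nonneg (by linarith [ht.2]) _)
  · exact ht.1

lemma integral_rpow_mul_one_sub_rpow {s u : ℝ} (hs : 0 < s) (hu : 0 < u) :
    ∫ t in (0 : ℝ)..1, t ^ (s - 1) * (1 - t) ^ (u - 1) = Gamma s * Gamma u / Gamma (s + u) := by
  have h := Complex.Gamma_mul_Gamma_eq_betaIntegral (s := s) (t := u)
    (by simpa using hs) (by simpa using hu)
  have hcoe : Complex.betaIntegral s u
      = ((∫ t in (0 : ℝ)..1, t ^ (s - 1) * (1 - t) ^ (u - 1) : ℝ) : ℂ) := by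
    rw [Complex.betaIntegral, ← intervalIntegral.integral_ofReal]
    refine intervalIntegral.integral_congr fun t ht => ?_
    rw [Set.uIcc_of_le zero_le_one] at ht
    simp only [Complex.ofReal_mul, Complex.ofReal_cpow ht.1,
      Complex.ofReal_cpow (sub_nonneg.2 ht.2)]
    push_cast
    rfl
  rw [hcoe, ← Complex.ofReal_add, Complex.Gamma_ofReal, Complex.Gamma_ofReal,
    Complex.Gamma_ofReal] at h
  rw [eq_div_iff (Gamma_pos_of_pos (add_pos hs hu)).ne', mul_comm]
  exact_mod_cast h.symm

lemma integral_rpow_mul_sub_rpow {s u x : ℝ} (hs : 0 < s) (hu : 0 < u) (hx : 0 < x) :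
    ∫ t in (0 : ℝ)..x, t ^ (s - 1) * (x - t) ^ (u - 1)
      = x ^ (s + u - 1) * (Gamma s * Gamma u / Gamma (s + u)) := by
  have hscale := intervalIntegral.integral_comp_mul_left
    (fun t => t ^ (s - 1) * (x - t) ^ (u - 1)) hx.ne' (a := 0) (b := 1)
  rw [mul_zero, mul_one, smul_eq_mul, eq_inv_mul_iff_mul_eq₀ hx.ne'] at hscale
  have hfactor : ∀ t ∈ Set.uIcc (0 : ℝ) 1, (x * t) ^ (s - 1) * (x - x * t) ^ (u - 1)
      = x ^ (s - 1) * x ^ (u - 1) * (t ^ (s - 1) * (1 - t) ^ (u - 1)) := by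
    intro t ht
    rw [Set.uIcc_of_le zero_le_one] at ht
    rw [← mul_one_sub, mul_rpow hx.le ht.1, mul_rpow hx.le (sub_nonneg.2 ht.2)]
    ring
  rw [← hscale, intervalIntegral.integral_congr hfactor, intervalIntegral.integral_const_mul,
    integral_rpow_mul_one_sub_rpow hs hu,
    show s + u - 1 = 1 + (s - 1) + (u - 1) by ring, rpow_add hx, rpow_add hx, rpow_one]
  ring

lemma sum_rpow_mul_sub_rpow_le {α β : ℝ} (hα : 0 < α) (hβ : 0 < β) (N : ℕ) :
    ∑ k ∈ range N, (k : ℝ) ^ β * (((N - k : ℕ) : ℝ) ^ α - ((N - (k + 1) : ℕ) : ℝ) ^ α)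
      ≤ α * β * Gamma α * Gamma β / ((α + β) * Gamma (α + β)) * (N : ℝ) ^ (α + β) := by
  rcases N.eq_zero_or_pos with rfl | hN
  · simp [zero_rpow (add_pos hα hβ).ne']
  refine (sum_rpow_mul_sub_rpow_le_integral hα hβ.le N).trans_eq ?_
  have hbeta := integral_rpow_mul_sub_rpow (by linarith : 0 < β + 1) hα (x := N) (by positivity)
  simp only [add_sub_cancel_right] at hbeta
  simp only [mul_left_comm _ α]
  rw [intervalIntegral.integral_const_mul, hbeta, Gamma_add_one hβ.ne',
    show β + 1 + α - 1 = α + β by ring, show β + 1 + α = (α + β) + 1 by ring,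
    Gamma_add_one (add_pos hα hβ).ne']
  field_simp

lemma ncard_pairs_le {A B : Set ℕ} (hA : 0 ∉ A) (hB : 0 ∉ B) {α β a' b' C₁ C₂ : ℝ}
    (hα : 0 < α) (hβ : 0 < β) (ha' : 0 ≤ a') (hb' : 0 ≤ b') (hC₁ : 0 ≤ C₁)
    (hAle : ∀ n, (countingFn A n : ℝ) ≤ a' * (n : ℝ) ^ α + C₁)
    (hBle : ∀ n, (countingFn B n : ℝ) ≤ b' * (n : ℝ) ^ β + C₂) (N : ℕ) :
    ({p : ℕ × ℕ | p.1 ∈ A ∧ p.2 ∈ B ∧ p.1 + p.2 ≤ N}.ncard : ℝ)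
      ≤ a' * b' * (α * β * Gamma α * Gamma β / ((α + β) * Gamma (α + β))) * (N : ℝ) ^ (α + β)
        + (a' * C₂ * (N : ℝ) ^ α + C₁ * b' * (N : ℝ) ^ β + C₁ * C₂) := by
  set w : ℕ → ℝ := fun k => ((N - k : ℕ) : ℝ) ^ α
  have hw : Antitone w := fun i j hij =>
    rpow_le_rpow (Nat.cast_nonneg _) (by exact_mod_cast Nat.sub_le_sub_left hij N) hα.le
  have hwN : w N = 0 := by simp [w, zero_rpow hα.ne']
  have hsplit : ∀ k : ℕ, (b' * (k : ℝ) ^ β + C₂) * ((a' * w k + C₁) - (a' * w (k + 1) + C₁))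
      = a' * b' * ((k : ℝ) ^ β * (w k - w (k + 1))) + a' * C₂ * (w k - w (k + 1)) := by
    intro k
    ring
  calc ({p : ℕ × ℕ | p.1 ∈ A ∧ p.2 ∈ B ∧ p.1 + p.2 ≤ N}.ncard : ℝ)
      = ∑ y ∈ range (N + 1), B.indicator (fun y => (countingFn A (N - y) : ℝ)) y :=
        ncard_pairs_eq_sum hA N
    _ ≤ ∑ y ∈ range (N + 1), B.indicator (fun y => a' * w y + C₁) y :=
        sum_le_sum fun y _ => Set.indicator_le_indicator (hAle _)
    _ ≤ ∑ k ∈ range N, (b' * (k : ℝ) ^ β + C₂) * ((a' * w k + C₁) - (a' * w (k + 1) + C₁))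
          + (b' * (N : ℝ) ^ β + C₂) * (a' * w N + C₁) :=
        sum_indicator_le hB ((hw.const_mul ha').add_const C₁) (by simpa [hwN]) hBle
    _ = a' * b' * ∑ k ∈ range N, (k : ℝ) ^ β * (w k - w (k + 1))
          + (a' * C₂ * (N : ℝ) ^ α + C₁ * b' * (N : ℝ) ^ β + C₁ * C₂) := by
        simp only [hsplit, sum_add_distrib, ← mul_sum, sum_range_sub', hwN]
        simp only [w, Nat.sub_zero]
        ring
    _ ≤ _ := by
        rw [mul_assoc (a' * b')]
        gcongr
        exact sum_rpow_mul_sub_rpow_le hα hβ N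

lemma exists_le_add_const_of_eventually_le {f φ : ℕ → ℝ} (hf : Monotone f) (hφ : ∀ n, 0 ≤ φ n)
    (h : ∃ N₀, ∀ N ≥ N₀, f N ≤ φ N) : ∃ C, 0 ≤ C ∧ ∀ n, f n ≤ φ n + C := by
  obtain ⟨N₀, hN₀⟩ := h
  refine ⟨max (f N₀) 0, le_max_right _ _, fun n => ?_⟩
  rcases le_total N₀ n with h | h
  · linarith [hN₀ n h, le_max_right (f N₀) 0]
  · linarith [hf h, le_max_left (f N₀) 0, hφ n]

lemma isLittleO_rpow_rpow_atTop {γ δ : ℝ} (h : γ < δ) :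
    (fun x : ℝ => x ^ γ) =o[atTop] fun x => x ^ δ := by
  refine (isLittleO_iff_tendsto' ?_).2 ((tendsto_rpow_neg_atTop (sub_pos.2 h)).congr' ?_)
  · filter_upwards [eventually_gt_atTop 0] with x hx h0
    exact absurd h0 (rpow_pos_of_pos hx δ).ne'
  · filter_upwards [eventually_gt_atTop 0] with x hx
    rw [← rpow_sub hx, neg_sub]

lemma eventually_add_rpow_le {α β δ : ℝ} (hα : 0 < α) (hβ : 0 < β) (hδ : 0 < δ) (c₁ c₂ c₃ : ℝ) :
    ∀ᶠ N : ℕ in atTop, c₁ * (N : ℝ) ^ α + c₂ * (N : ℝ) ^ β + c₃ ≤ δ * (N : ℝ) ^ (α + β) := by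
  have hconst : (fun x : ℝ => c₃) =o[atTop] fun x => x ^ (α + β) :=
    ((isLittleO_rpow_rpow_atTop (add_pos hα hβ)).const_mul_left c₃).congr_left fun x => by simp
  have hsum : (fun x : ℝ => c₁ * x ^ α + c₂ * x ^ β + c₃) =o[atTop] fun x => x ^ (α + β) :=
    (((isLittleO_rpow_rpow_atTop (by linarith)).const_mul_left c₁).add
      ((isLittleO_rpow_rpow_atTop (by linarith)).const_mul_left c₂)).add hconst
  filter_upwards [(hsum.comp_tendsto tendsto_natCast_atTop_atTop).def hδ] with N hN
  simp only [Function.comp_apply] at hN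
  rw [Real.norm_of_nonneg (rpow_nonneg N.cast_nonneg _)] at hN
  exact (le_abs_self _).trans hN

theorem stmt0_general (A B : Set ℕ) (hA0 : ∀ n ∈ A, 0 < n) (hB0 : ∀ n ∈ B, 0 < n)
    (a b α β : ℝ) (ha : 0 < a) (hb : 0 < b)
    (hα : 0 < α) (hβ : 0 < β)
    (hAcount : ∀ ε > 0, ∃ N₀ : ℕ, ∀ N ≥ N₀,
      ((A ∩ Set.Icc 1 N).ncard : ℝ) ≤ (a + ε) * (N : ℝ) ^ α)
    (hBcount : ∀ ε > 0, ∃ N₀ : ℕ, ∀ N ≥ N₀,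
      ((B ∩ Set.Icc 1 N).ncard : ℝ) ≤ (b + ε) * (N : ℝ) ^ β) :
    ∀ ε > 0, ∃ N₀ : ℕ, ∀ N ≥ N₀,
      (({p : ℕ × ℕ | p.1 ∈ A ∧ p.2 ∈ B ∧ p.1 + p.2 ≤ N}).ncard : ℝ) ≤
        (a * b * α * β * Real.Gamma α * Real.Gamma β /
          ((α + β) * Real.Gamma (α + β)) + ε) * (N : ℝ) ^ (α + β) := by
  intro ε hε
  set C₀ := α * β * Gamma α * Gamma β / ((α + β) * Gamma (α + β))
  obtain ⟨ε', hε'C, hε'⟩ : ∃ ε', (a + ε') * (b + ε') * C₀ < a * b * C₀ + ε / 2 ∧ 0 < ε' := by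
    have hnear : ∀ᶠ e in 𝓝 (0 : ℝ), (a + e) * (b + e) * C₀ < a * b * C₀ + ε / 2 :=
      ContinuousAt.eventually_lt (by fun_prop) continuousAt_const (by simpa using half_pos hε)
    exact ((hnear.filter_mono nhdsWithin_le_nhds).and self_mem_nhdsWithin).exists (f := 𝓝[>] 0)
  obtain ⟨C₁, hC₁, hA⟩ := exists_le_add_const_of_eventually_le
    (Nat.mono_cast.comp (countingFn_mono A)) (fun n => by positivity) (hAcount ε' hε')
  obtain ⟨C₂, -, hB⟩ := exists_le_add_const_of_eventually_le
    (Nat.mono_cast.comp (countingFn_mono B)) (fun n => by positivity) (hBcount ε' hε')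
  obtain ⟨N₀, hN₀⟩ := eventually_atTop.1 (eventually_add_rpow_le hα hβ (half_pos hε)
    ((a + ε') * C₂) (C₁ * (b + ε')) (C₁ * C₂))
  refine ⟨N₀, fun N hN => ?_⟩
  calc _ ≤ (a + ε') * (b + ε') * C₀ * (N : ℝ) ^ (α + β)
          + ((a + ε') * C₂ * (N : ℝ) ^ α + C₁ * (b + ε') * (N : ℝ) ^ β + C₁ * C₂) :=
        ncard_pairs_le (fun h => lt_irrefl 0 (hA0 0 h)) (fun h => lt_irrefl 0 (hB0 0 h)) hα hβ
          (by positivity) (by positivity) hC₁ hA hB N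
    _ ≤ (a * b * C₀ + ε / 2) * (N : ℝ) ^ (α + β) + ε / 2 * (N : ℝ) ^ (α + β) :=
        add_le_add (mul_le_mul_of_nonneg_right hε'C.le (by positivity)) (hN₀ N hN)
    _ = _ := by ring

/-- If A(N) ≤ (a+o(1))N^α and B(N) ≤ (b+o(1))N^β, then the number of
pairs (x,y) ∈ A × B with x + y ≤ N is at most
((a·b·α·β·Γ(α)Γ(β))/((α+β)Γ(α+β)) + o(1))·N^(α+β). -/
theorem stmt0 (A B : Set ℕ) (hA0 : ∀ n ∈ A, 0 < n) (hB0 : ∀ n ∈ B, 0 < n)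
    (a b α β : ℝ) (ha : 0 < a) (hb : 0 < b)
    (hα : 0 < α) (hα1 : α < 1) (hβ : 0 < β) (hβ1 : β < 1)
    (hAcount : ∀ ε > 0, ∃ N₀ : ℕ, ∀ N ≥ N₀,
      ((A ∩ Set.Icc 1 N).ncard : ℝ) ≤ (a + ε) * (N : ℝ) ^ α)
    (hBcount : ∀ ε > 0, ∃ N₀ : ℕ, ∀ N ≥ N₀,
      ((B ∩ Set.Icc 1 N).ncard : ℝ) ≤ (b + ε) * (N : ℝ) ^ β) :
    ∀ ε > 0, ∃ N₀ : ℕ, ∀ N ≥ N₀,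
      (({p : ℕ × ℕ | p.1 ∈ A ∧ p.2 ∈ B ∧ p.1 + p.2 ≤ N}).ncard : ℝ) ≤
        (a * b * α * β * Real.Gamma α * Real.Gamma β /
          ((α + β) * Real.Gamma (α + β)) + ε) * (N : ℝ) ^ (α + β) :=
  stmt0_general A B hA0 hB0 a b α β ha hb hα hβ hAcount hBcount
end

section
/- If A is a Sidon set of positive integers, then the upper asymptotic density of A + A is at most 1/2. -/
/-!
Erdős–Turán: slide a window of length `t ≈ C √n` across `[0, n + t)`. Each element of
`S = A ∩ [0, n]` lies in exactly `t` windows, so the window counts sum to `t |S|`; an ordered pair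
of distinct elements sharing a window has a difference in `(-t, t)`, and distinct pairs have distinct
differences, so the squared counts sum to at most `t |S| + t²`. Cauchy–Schwarz then gives
`|S|² t ≤ (n + 1 + t)(|S| + t)`, whence `|S| ≤ (1 + O(1/C) + o(1)) √n`. Since
`|(A + A) ∩ [1, n]| ≤ |S + S| ≤ |S|(|S| + 1)/2`, the density of `A + A` is at most `1/2 + O(1/C)`.
-/

open Pointwise Filter Finset

def IsSidon {α : Type*} [Add α] (A : Set α) : Prop :=
  ∀ a ∈ A, ∀ b ∈ A, ∀ c ∈ A, ∀ d ∈ A, a + b = c + d → (a = c ∧ b = d) ∨ (a = d ∧ b = c)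

theorem IsSidon.mono {α : Type*} [Add α] {A B : Set α} (hB : IsSidon B) (hAB : A ⊆ B) :
    IsSidon A := fun a ha b hb c hc d hd =>
  hB a (hAB ha) b (hAB hb) c (hAB hc) d (hAB hd)

theorem Finset.card_add_self_le_choose {α : Type*} [AddCommMagma α] [DecidableEq α]
    (s : Finset α) : #(s + s) ≤ (#s + 1).choose 2 := by
  calc #(s + s) ≤ #(s.sym2.image (Sym2.lift ⟨(· + ·), add_comm⟩)) := by
        refine card_le_card fun x hx => ?_
        obtain ⟨a, ha, b, hb, rfl⟩ := mem_add.1 hx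
        exact mem_image.2 ⟨s(a, b), mk_mem_sym2_iff.2 ⟨ha, hb⟩, rfl⟩
    _ ≤ #s.sym2 := card_image_le
    _ = (#s + 1).choose 2 := card_sym2 s

theorem ncard_add_inter_Icc_le_choose (A : Set ℕ) [DecidablePred (· ∈ A)] (n : ℕ) :
    ((A + A) ∩ Set.Icc 1 n).ncard ≤ (#{a ∈ range (n + 1) | a ∈ A} + 1).choose 2 := by
  set S := {a ∈ range (n + 1) | a ∈ A}
  have hsub : (A + A) ∩ Set.Icc 1 n ⊆ ↑(S + S) := by
    rintro _ ⟨⟨a, ha, b, hb, rfl⟩, -, hab : a + b ≤ n⟩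
    rw [coe_add]
    exact Set.add_mem_add (by simp [S, ha]; omega) (by simp [S, hb]; omega)
  calc ((A + A) ∩ Set.Icc 1 n).ncard ≤ (↑(S + S) : Set ℕ).ncard := Set.ncard_le_ncard hsub
    _ = #(S + S) := Set.ncard_coe_finset _
    _ ≤ (#S + 1).choose 2 := S.card_add_self_le_choose

/-- The elements of `S` in the interval `(j - t, j]`. -/
def window (S : Finset ℕ) (t j : ℕ) : Finset ℕ := {s ∈ S | s ≤ j ∧ j < s + t}

theorem sum_card_window {S : Finset ℕ} {N : ℕ} (hS : S ⊆ range N) (t : ℕ) :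
    ∑ j ∈ range (N + t), #(window S t j) = t * #S := by
  have hcount :
      ∀ s ∈ S, #(bipartiteAbove (fun s j => s ≤ j ∧ j < s + t) (range (N + t)) s) = t := by
    intro s hs
    have hsN := mem_range.1 (hS hs)
    rw [bipartiteAbove, show {j ∈ range (N + t) | s ≤ j ∧ j < s + t} = Ico s (s + t) by
      ext j; simp only [mem_filter, mem_range, mem_Ico]; omega]
    simp
  calc ∑ j ∈ range (N + t), #(window S t j)
      = ∑ s ∈ S, #(bipartiteAbove (fun s j => s ≤ j ∧ j < s + t) (range (N + t)) s) :=
        (sum_card_bipartiteAbove_eq_sum_card_bipartiteBelow _).symm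
    _ = t * #S := by rw [sum_congr rfl hcount, sum_const, smul_eq_mul, mul_comm]

theorem IsSidon.sum_card_offDiag_window_le {S : Finset ℕ} (hS : IsSidon (S : Set ℕ)) (t M : ℕ) :
    ∑ j ∈ range M, #(window S t j).offDiag ≤ t * t - t := by
  rw [← card_sigma, show t * t - t = #(range t).offDiag by rw [offDiag_card, card_range]]
  refine card_le_card_of_injOn (fun x => (x.1 - x.2.1, x.1 - x.2.2)) ?_ ?_
  · rintro ⟨j, a, b⟩ hx
    simp only [coe_sigma, Set.mem_sigma_iff, coe_offDiag, Set.mem_offDiag, window, coe_filter,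
      Set.mem_ofPred_eq] at hx
    simp only [coe_offDiag, Set.mem_offDiag, coe_range, Set.mem_Iio]
    omega
  · rintro ⟨j, a, b⟩ hx ⟨j', a', b'⟩ hx' h
    simp only [coe_sigma, Set.mem_sigma_iff, coe_offDiag, Set.mem_offDiag, window, coe_filter,
      Set.mem_ofPred_eq] at hx hx'
    simp only [Prod.mk.injEq] at h
    -- `(j - a, j - b)` determines `a - b`, hence `(a, b)` by the Sidon property, hence `j`.
    rcases hS a hx.2.1.1 b' hx'.2.2.1.1 a' hx'.2.1.1 b hx.2.2.1.1 (by omega) with h1 | h1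
    · obtain rfl : j = j' := by omega
      obtain rfl : a = a' := h1.1
      obtain rfl : b = b' := h1.2.symm
      rfl
    · omega

theorem IsSidon.card_sq_mul_le {S : Finset ℕ} {N t : ℕ} (hS : IsSidon (S : Set ℕ))
    (hSN : S ⊆ range N) (ht : 0 < t) : #S ^ 2 * t ≤ (N + t) * (#S + t) := by
  have hsq : ∀ j, #(window S t j) ^ 2 = #(window S t j).offDiag + #(window S t j) := by
    intro j
    rw [offDiag_card, sq, Nat.sub_add_cancel (Nat.le_mul_self _)]
  have hsum_sq : ∑ j ∈ range (N + t), #(window S t j) ^ 2 ≤ t * t - t + t * #S := by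
    rw [sum_congr rfl fun j _ => hsq j, sum_add_distrib, sum_card_window hSN]
    exact Nat.add_le_add_right (hS.sum_card_offDiag_window_le t _) _
  have hCS := sq_sum_le_card_mul_sum_sq (s := range (N + t)) (f := fun j => #(window S t j))
  rw [sum_card_window hSN, card_range] at hCS
  refine Nat.le_of_mul_le_mul_right ?_ ht
  calc #S ^ 2 * t * t = (t * #S) ^ 2 := by ring
    _ ≤ (N + t) * (t * t - t + t * #S) := hCS.trans (Nat.mul_le_mul_left _ hsum_sq)
    _ ≤ (N + t) * (#S + t) * t := by
      rw [mul_assoc]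
      exact Nat.mul_le_mul_left _ (by rw [add_mul, mul_comm #S]; omega)

/-- With `x = √n`, `hcrude` and `hET` are the bound `IsSidon.card_sq_mul_le` for `t = n + 1` and
for a window `t ≈ C x`. -/
theorem sq_add_le_of_window_bounds {k x C t : ℝ} (hk : 0 ≤ k) (hx : 1 ≤ x) (hC : 0 < C)
    (htC : C * x ≤ t) (ht : t ≤ C * x + 1) (hcrude : k ^ 2 ≤ 2 * (x ^ 2 + 1 + k))
    (hET : k ^ 2 * t ≤ (x ^ 2 + 1 + t) * (k + t)) :
    k ^ 2 + k ≤ (1 + 8 / C) * x ^ 2 + (C + 10) * x := by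
  have hk4 : k ≤ 4 * x := by nlinarith
  have ht0 : 0 < t := lt_of_lt_of_le (by positivity) htC
  have hfrac : (x ^ 2 + 1) * k / t ≤ 8 / C * x ^ 2 := by
    rw [div_le_iff₀ ht0]
    calc (x ^ 2 + 1) * k ≤ 2 * x ^ 2 * (4 * x) := by gcongr; nlinarith
      _ = 8 / C * x ^ 2 * (C * x) := by field_simp; ring
      _ ≤ 8 / C * x ^ 2 * t := by gcongr
  have hdiv : k ^ 2 ≤ (x ^ 2 + 1) * k / t + x ^ 2 + 1 + k + t := by
    rw [← sub_nonneg]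
    have : (x ^ 2 + 1) * k / t + x ^ 2 + 1 + k + t - k ^ 2
        = ((x ^ 2 + 1 + t) * (k + t) - k ^ 2 * t) / t := by field_simp; ring
    rw [this]
    exact div_nonneg (sub_nonneg.2 hET) ht0.le
  nlinarith

theorem IsSidon.eventually_sq_add_le {A : Set ℕ} [DecidablePred (· ∈ A)] (hA : IsSidon A)
    {ε : ℝ} (hε : 0 < ε) :
    ∀ᶠ n : ℕ in atTop, (#{a ∈ range (n + 1) | a ∈ A} : ℝ) ^ 2 + #{a ∈ range (n + 1) | a ∈ A}
      ≤ (1 + ε) * n := by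
  set C := 16 / ε
  filter_upwards [eventually_ge_atTop ⌈(2 * (C + 10) / ε) ^ 2⌉₊, eventually_ge_atTop 1]
    with n hn hn1
  set S := {a ∈ range (n + 1) | a ∈ A}
  have hS : IsSidon (S : Set ℕ) := hA.mono fun a ha => (mem_filter.1 ha).2
  set x := √(n : ℝ)
  have hnx : (n : ℝ) = x ^ 2 := (Real.sq_sqrt n.cast_nonneg).symm
  have hx1 : 1 ≤ x := Real.one_le_sqrt.2 (by exact_mod_cast hn1)
  have hET (t : ℕ) (ht : 0 < t) : (#S : ℝ) ^ 2 * t ≤ (x ^ 2 + 1 + t) * (#S + t) := by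
    rw [← hnx]
    exact_mod_cast hS.card_sq_mul_le (filter_subset _ _) ht
  have hcrude : (#S : ℝ) ^ 2 ≤ 2 * (x ^ 2 + 1 + #S) := by
    have := hET (n + 1) n.succ_pos
    push_cast [hnx] at this
    nlinarith
  have hC : 0 < C := by positivity
  have hbound := sq_add_le_of_window_bounds (#S).cast_nonneg hx1 hC (Nat.le_ceil (C * x))
    (Nat.ceil_lt_add_one (by positivity)).le hcrude (hET _ (Nat.ceil_pos.2 (by positivity)))
  have hxlarge : 2 * (C + 10) / ε ≤ x :=
    Real.le_sqrt_of_sq_le (Nat.ceil_le.1 hn)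
  have hlin : (C + 10) * x ≤ ε / 2 * x ^ 2 := by
    rw [div_le_iff₀ hε] at hxlarge
    nlinarith
  have h8C : 8 / C = ε / 2 := by simp only [C]; field_simp; ring
  rw [hnx]
  nlinarith

theorem stmt5_general (A : Set ℕ)
    (hSidon : ∀ a ∈ A, ∀ b ∈ A, ∀ c ∈ A, ∀ d ∈ A,
      a + b = c + d → (a = c ∧ b = d) ∨ (a = d ∧ b = c)) :
    limsup (fun n : ℕ => (((A + A) ∩ Set.Icc 1 n).ncard : ℝ) / (n : ℝ)) atTop ≤ 1 / 2 := by
  classical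
  refine le_of_forall_pos_le_add fun ε hε => limsup_le_of_le
    (isCoboundedUnder_le_of_le atTop fun n => by positivity) ?_
  filter_upwards [IsSidon.eventually_sq_add_le hSidon (ε := 2 * ε) (by positivity),
    eventually_gt_atTop 0] with n hS hn
  have hcount := (Nat.cast_le (α := ℝ)).2 (ncard_add_inter_Icc_le_choose A n)
  rw [Nat.cast_choose_two] at hcount
  push_cast at hcount
  rw [div_le_iff₀ (by positivity)]
  nlinarith

/-- If A is a Sidon set of positive integers, then the upper asymptotic
density of A + A is at most 1/2. -/
theorem stmt5 (A : Set ℕ) (hA0 : ∀ n ∈ A, 0 < n)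
    (hSidon : ∀ a ∈ A, ∀ b ∈ A, ∀ c ∈ A, ∀ d ∈ A,
      a + b = c + d → (a = c ∧ b = d) ∨ (a = d ∧ b = c)) :
    limsup (fun n : ℕ => (((A + A) ∩ Set.Icc 1 n).ncard : ℝ) / (n : ℝ)) atTop ≤ 1 / 2 :=
  stmt5_general A hSidon
end

section
/- The triple integral ∭_D 1/(x^{2/3} y^{2/3} z^{2/3} (x+y-z)^{2/3}) dV over the region D = {(x,y,z) : 0 < x < 1, 0 < y < x, y < z < (x+y)/2} is finite, and in fact is at most 27·2^{2/3}. -/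
/-!
On `D` one has `0 < y < z < x` and `x + y - z > (x + y) / 2 ≥ x / 2`, so the integrand is at most
`2 ^ (2/3) x ^ (-4/3) y ^ (-2/3) z ^ (-2/3)`, and `D` lies in the pyramid
`0 < x < 1, 0 < y, z < x`. Over the pyramid the majorant integrates in closed form: the inner
integrals in `y` and `z` give `9 x ^ (2/3)`, leaving `9 ∫₀¹ x ^ (-2/3) dx = 27`.
-/

open MeasureTheory Set
open scoped ENNReal

lemma lintegral_Ioo_rpow {a r : ℝ} (ha : 0 ≤ a) (hr : -1 < r) :
    ∫⁻ t in Ioo 0 a, ENNReal.ofReal (t ^ r) = ENNReal.ofReal (a ^ (r + 1) / (r + 1)) := by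
  rw [Measure.restrict_congr_set Ioo_ae_eq_Ioc,
    ← ofReal_integral_eq_lintegral_ofReal (intervalIntegral.intervalIntegrable_rpow' hr).1
      ((ae_restrict_mem measurableSet_Ioc).mono fun t ht => Real.rpow_nonneg ht.1.le r),
    ← intervalIntegral.integral_of_le ha, integral_rpow (Or.inl hr),
    Real.zero_rpow (by linarith), sub_zero]

lemma setLIntegral_prod_fiber {α β : Type*} [MeasurableSpace α] [MeasurableSpace β]
    {μ : Measure α} {ν : Measure β} [SFinite ν] {s : Set α} {t : α → Set β}
    (hs : MeasurableSet s) (hst : MeasurableSet {p : α × β | p.1 ∈ s ∧ p.2 ∈ t p.1})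
    {f : α × β → ℝ≥0∞} (hf : Measurable f) :
    ∫⁻ p in {p : α × β | p.1 ∈ s ∧ p.2 ∈ t p.1}, f p ∂(μ.prod ν) =
      ∫⁻ x in s, ∫⁻ y in t x, f (x, y) ∂ν ∂μ := by
  rw [← lintegral_indicator hst, lintegral_prod _ (hf.indicator hst).aemeasurable,
    ← lintegral_indicator hs]
  congr 1
  ext x
  by_cases hx : x ∈ s
  · have hslice : Prod.mk x ⁻¹' {p : α × β | p.1 ∈ s ∧ p.2 ∈ t p.1} = t x := by
      ext y; simp [hx]
    rw [indicator_of_mem hx, ← hslice, ← lintegral_indicator (measurable_prodMk_left hst)]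
    rfl
  · simp [indicator, hx]

def pyramid : Set (ℝ × ℝ × ℝ) := {p | p.1 ∈ Ioo 0 1 ∧ p.2 ∈ Ioo 0 p.1 ×ˢ Ioo 0 p.1}

lemma measurableSet_pyramid : MeasurableSet pyramid := by
  simp only [pyramid, mem_Ioo, mem_prod]
  measurability

lemma lintegral_pyramid_rpow {a b c : ℝ} (hb : -1 < b) (hc : -1 < c) (habc : -1 < a + b + c + 2) :
    ∫⁻ p in pyramid, ENNReal.ofReal (p.1 ^ a) * ENNReal.ofReal (p.2.1 ^ b) *
      ENNReal.ofReal (p.2.2 ^ c) = ENNReal.ofReal (1 / ((b + 1) * (c + 1) * (a + b + c + 3))) := by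
  have hb1 : 0 < b + 1 := by linarith
  have hc1 : 0 < c + 1 := by linarith
  have hfiber : ∀ x ∈ Ioo (0 : ℝ) 1,
      ∫⁻ q in Ioo 0 x ×ˢ Ioo 0 x, ENNReal.ofReal (x ^ a) * ENNReal.ofReal (q.1 ^ b) *
        ENNReal.ofReal (q.2 ^ c) =
      ENNReal.ofReal (((b + 1) * (c + 1))⁻¹) * ENNReal.ofReal (x ^ (a + b + c + 2)) := by
    rintro x ⟨hx, -⟩
    simp_rw [mul_assoc]
    rw [lintegral_const_mul _ (by fun_prop), Measure.volume_eq_prod, ← Measure.prod_restrict,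
      lintegral_prod_mul (f := fun t : ℝ => ENNReal.ofReal (t ^ b))
        (g := fun t : ℝ => ENNReal.ofReal (t ^ c)) (by fun_prop) (by fun_prop),
      lintegral_Ioo_rpow hx.le hb, lintegral_Ioo_rpow hx.le hc,
      ← ENNReal.ofReal_mul (by positivity),
      ← ENNReal.ofReal_mul (by positivity), ← ENNReal.ofReal_mul (by positivity)]
    congr 1
    rw [show a + b + c + 2 = a + (b + 1) + (c + 1) by ring, Real.rpow_add hx (a + (b + 1)),
      Real.rpow_add hx a, mul_inv]
    ring
  rw [pyramid, Measure.volume_eq_prod,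
    setLIntegral_prod_fiber (t := fun x => Ioo 0 x ×ˢ Ioo 0 x) measurableSet_Ioo
      measurableSet_pyramid (by fun_prop),
    setLIntegral_congr_fun measurableSet_Ioo hfiber,
    lintegral_const_mul _ (by fun_prop), lintegral_Ioo_rpow zero_le_one habc,
    ← ENNReal.ofReal_mul (by positivity)]
  congr 1
  rw [Real.one_rpow]
  field_simp
  ring

lemma one_div_rpow_le {x y z w a : ℝ} (hx : 0 < x) (hy : 0 < y) (hz : 0 < z) (hw : x / 2 ≤ w)
    (ha : 0 ≤ a) :
    1 / (x ^ a * y ^ a * z ^ a * w ^ a) ≤ 2 ^ a * (x ^ (-(2 * a)) * y ^ (-a) * z ^ (-a)) := by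
  calc 1 / (x ^ a * y ^ a * z ^ a * w ^ a) ≤ 1 / (x ^ a * y ^ a * z ^ a * (x / 2) ^ a) := by
        gcongr
    _ = 2 ^ a * (x ^ (-(2 * a)) * y ^ (-a) * z ^ (-a)) := by
        rw [Real.div_rpow hx.le zero_le_two, Real.rpow_neg hx.le, Real.rpow_neg hy.le,
          Real.rpow_neg hz.le, two_mul, Real.rpow_add hx]
        have : 0 < (2 : ℝ) ^ a := by positivity
        field_simp

lemma enorm_one_div_rpow_le {x y z w a : ℝ} (hx : 0 < x) (hy : 0 < y) (hz : 0 < z)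
    (hw : x / 2 ≤ w) (ha : 0 ≤ a) :
    ‖1 / (x ^ a * y ^ a * z ^ a * w ^ a)‖ₑ ≤
      ENNReal.ofReal (2 ^ a) * (ENNReal.ofReal (x ^ (-(2 * a))) * ENNReal.ofReal (y ^ (-a)) *
        ENNReal.ofReal (z ^ (-a))) := by
  have hw0 : 0 < w := by linarith
  rw [Real.enorm_eq_ofReal (by positivity), ← ENNReal.ofReal_mul (by positivity),
    ← ENNReal.ofReal_mul (by positivity), ← ENNReal.ofReal_mul (by positivity)]
  exact ENNReal.ofReal_le_ofReal (one_div_rpow_le hx hy hz hw ha)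

lemma integrableOn_and_setIntegral_le_of_lintegral_enorm_le {α : Type*} [MeasurableSpace α]
    {μ : Measure α} {s : Set α} {f : α → ℝ} {C : ℝ}
    (hf : AEStronglyMeasurable f (μ.restrict s)) (hC : 0 ≤ C)
    (h : ∫⁻ x in s, ‖f x‖ₑ ∂μ ≤ ENNReal.ofReal C) :
    IntegrableOn f s μ ∧ ∫ x in s, f x ∂μ ≤ C := by
  refine ⟨⟨hf, h.trans_lt ENNReal.ofReal_lt_top⟩, ?_⟩
  calc ∫ x in s, f x ∂μ ≤ ‖∫ x in s, f x ∂μ‖ := Real.le_norm_self _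
    _ = ‖∫ x in s, f x ∂μ‖ₑ.toReal := (toReal_enorm _).symm
    _ ≤ C := ENNReal.toReal_le_of_le_ofReal hC ((enorm_integral_le_lintegral_enorm f).trans h)

/-- The integral of 1/(x^{2/3} y^{2/3} z^{2/3} (x+y-z)^{2/3}) over
D = {(x,y,z) : 0 < x < 1, 0 < y < x, y < z < (x+y)/2} is finite (the function is
integrable on D), and the integral is at most 27·2^{2/3}. -/
theorem stmt9 :
    IntegrableOn
      (fun p : ℝ × ℝ × ℝ =>
        1 / (p.1 ^ ((2:ℝ)/3) * p.2.1 ^ ((2:ℝ)/3) * p.2.2 ^ ((2:ℝ)/3) *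
          (p.1 + p.2.1 - p.2.2) ^ ((2:ℝ)/3)))
      {p : ℝ × ℝ × ℝ | 0 < p.1 ∧ p.1 < 1 ∧ 0 < p.2.1 ∧ p.2.1 < p.1 ∧
        p.2.1 < p.2.2 ∧ p.2.2 < (p.1 + p.2.1) / 2} volume ∧
    (∫ p : ℝ × ℝ × ℝ in
      {p : ℝ × ℝ × ℝ | 0 < p.1 ∧ p.1 < 1 ∧ 0 < p.2.1 ∧ p.2.1 < p.1 ∧
        p.2.1 < p.2.2 ∧ p.2.2 < (p.1 + p.2.1) / 2},
        1 / (p.1 ^ ((2:ℝ)/3) * p.2.1 ^ ((2:ℝ)/3) * p.2.2 ^ ((2:ℝ)/3) *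
          (p.1 + p.2.1 - p.2.2) ^ ((2:ℝ)/3))) ≤ 27 * 2 ^ ((2:ℝ)/3) := by
  set a : ℝ := 2 / 3
  refine integrableOn_and_setIntegral_le_of_lintegral_enorm_le
    (Measurable.aestronglyMeasurable (by fun_prop)) (by positivity) ?_
  calc _ ≤ ∫⁻ p : ℝ × ℝ × ℝ in _, ENNReal.ofReal (2 ^ a) *
          (ENNReal.ofReal (p.1 ^ (-(2 * a))) * ENNReal.ofReal (p.2.1 ^ (-a)) *
            ENNReal.ofReal (p.2.2 ^ (-a))) := by
        refine setLIntegral_mono (by fun_prop) ?_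
        rintro ⟨x, y, z⟩ ⟨hx, -, hy, -, hyz, hz⟩
        dsimp only at *
        exact enorm_one_div_rpow_le hx hy (hy.trans hyz) (by linarith) (by positivity)
    _ ≤ ∫⁻ p in pyramid, ENNReal.ofReal (2 ^ a) * (ENNReal.ofReal (p.1 ^ (-(2 * a))) *
          ENNReal.ofReal (p.2.1 ^ (-a)) * ENNReal.ofReal (p.2.2 ^ (-a))) := by
        refine lintegral_mono_set ?_
        rintro ⟨x, y, z⟩ ⟨hx, hx1, hy, hyx, hyz, hz⟩
        dsimp only at *
        exact ⟨⟨hx, hx1⟩, ⟨hy, hyx⟩, ⟨hy.trans hyz, by linarith⟩⟩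
    _ = ENNReal.ofReal (2 ^ a) * ENNReal.ofReal 27 := by
        rw [lintegral_const_mul _ (by fun_prop),
          lintegral_pyramid_rpow (by norm_num) (by norm_num) (by norm_num)]
        norm_num
    _ = ENNReal.ofReal (27 * 2 ^ a) := by rw [← ENNReal.ofReal_mul (by positivity), mul_comm]
end

section
/- There is a constant C > 0 such that for all N ≥ 2, ∑_{x₁=3}^{N} x₁^{-2/3} ∑_{1 ≤ x₄ < x₁, x₄ ≡ x₁ (mod 2)} x₄^{-2/3} · ((x₁+x₄)/2)^{-2/3} ≤ C·log N. -/
/-!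
Since `x₄ ≥ 1`, the factor `((x₁ + x₄)/2)^(-2/3)` is at most `(x₁/2)^(-2/3)`. Dropping the parity
condition, the inner sum is then at most `(x₁/2)^(-2/3) ∑_{k < x₁} k^(-2/3) ≤ 3 · 2^(2/3) · x₁^(-1/3)`,
the last step by comparing `k^(-2/3)` with the increment of `3 k^(1/3)` (Bernoulli's inequality).
So the `x₁`-th term is at most `3 · 2^(2/3) / x₁`, and `∑_{2 ≤ x₁ ≤ N} 1/x₁ = H_N - 1 ≤ log N`.
-/

open Finset Real

theorem rpow_sub_one_le_rpow_sub {b p : ℝ} (hb : 1 ≤ b) (hp0 : 0 ≤ p) (hp1 : p ≤ 1) :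
    (b - 1) ^ p ≤ b ^ p - p * b ^ (p - 1) := by
  have hb0 : 0 < b := by linarith
  have hsplit : b - 1 = b * (1 + -b⁻¹) := by field_simp; ring
  have hbern : (1 + -b⁻¹) ^ p ≤ 1 + p * -b⁻¹ :=
    rpow_one_add_le_one_add_mul_self (by linarith [inv_le_one_of_one_le₀ hb]) hp0 hp1
  calc (b - 1) ^ p = b ^ p * (1 + -b⁻¹) ^ p := by
        rw [hsplit, mul_rpow hb0.le (by linarith [inv_le_one_of_one_le₀ hb])]
    _ ≤ b ^ p * (1 + p * -b⁻¹) := by gcongr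
    _ = b ^ p - p * b ^ (p - 1) := by rw [rpow_sub_one hb0.ne']; ring

theorem sum_Icc_rpow_neg_le {s : ℝ} (hs0 : 0 ≤ s) (hs1 : s < 1) (m : ℕ) :
    ∑ k ∈ Icc 1 m, (k : ℝ) ^ (-s) ≤ (m : ℝ) ^ (1 - s) / (1 - s) := by
  induction m with
  | zero => simp [zero_rpow (by linarith : 1 - s ≠ 0)]
  | succ m ih =>
    rw [sum_Icc_succ_top (by omega)]
    have key := rpow_sub_one_le_rpow_sub (b := ((m + 1 : ℕ) : ℝ)) (by simp)
      (by linarith) (by linarith : 1 - s ≤ 1)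
    rw [show 1 - s - 1 = -s by ring, Nat.cast_succ, add_sub_cancel_right] at key
    rw [le_div_iff₀ (by linarith)] at ih ⊢
    push_cast
    linarith

theorem sum_Icc_two_inv_le_log (n : ℕ) : ∑ i ∈ Icc 2 n, (i : ℝ)⁻¹ ≤ log n := by
  rcases Nat.eq_zero_or_pos n with rfl | hn
  · simp
  have h := harmonic_le_one_add_log n
  rw [harmonic_eq_sum_Icc, ← add_sum_Ioc_eq_sum_Icc hn, ← Icc_add_one_left_eq_Ioc] at h
  push_cast at h
  linarith

theorem sum_Icc_rpow_mul_half_add_rpow_le (x : ℕ) :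
    ∑ y ∈ Icc 1 (x - 1), (y : ℝ) ^ (-(2:ℝ)/3) * (((x : ℝ) + y) / 2) ^ (-(2:ℝ)/3)
      ≤ 3 * 2 ^ ((2:ℝ)/3) * (x : ℝ) ^ (-(1:ℝ)/3) := by
  rcases Nat.eq_zero_or_pos x with rfl | hx
  · simp
  have hx0 : (0:ℝ) < x := by exact_mod_cast hx
  calc ∑ y ∈ Icc 1 (x - 1), (y : ℝ) ^ (-(2:ℝ)/3) * (((x : ℝ) + y) / 2) ^ (-(2:ℝ)/3)
      ≤ ∑ y ∈ Icc 1 (x - 1), (y : ℝ) ^ (-(2:ℝ)/3) * ((x : ℝ) / 2) ^ (-(2:ℝ)/3) := by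
        refine sum_le_sum fun y _ => mul_le_mul_of_nonneg_left ?_ (by positivity)
        exact rpow_le_rpow_of_nonpos (by positivity)
          (by linarith [y.cast_nonneg (α := ℝ)]) (by norm_num)
    _ = ((x : ℝ) / 2) ^ (-(2:ℝ)/3) * ∑ y ∈ Icc 1 (x - 1), (y : ℝ) ^ (-(2:ℝ)/3) := by
        rw [← sum_mul, mul_comm]
    _ ≤ ((x : ℝ) / 2) ^ (-(2:ℝ)/3) * (((x - 1 : ℕ) : ℝ) ^ (1 - (2:ℝ)/3) / (1 - 2/3)) := by
        rw [neg_div]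
        gcongr
        exact sum_Icc_rpow_neg_le (by norm_num) (by norm_num) (x - 1)
    _ ≤ ((x : ℝ) / 2) ^ (-(2:ℝ)/3) * ((x : ℝ) ^ (1 - (2:ℝ)/3) / (1 - 2/3)) := by
        gcongr
        exact Nat.sub_le x 1
    _ = 3 * 2 ^ ((2:ℝ)/3) * (x : ℝ) ^ (-(1:ℝ)/3) := by
        have h2 : (2:ℝ) ^ (-(2:ℝ)/3) = (2 ^ ((2:ℝ)/3))⁻¹ := by rw [neg_div, rpow_neg zero_le_two]
        have hx : (x : ℝ) ^ (-(2:ℝ)/3) * (x : ℝ) ^ (1 - (2:ℝ)/3) = (x : ℝ) ^ (-(1:ℝ)/3) := by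
          rw [← rpow_add hx0]; norm_num
        rw [div_rpow hx0.le zero_le_two, h2, ← hx]
        field_simp
        norm_num

/-- ∑_{x₁=3}^{N} x₁^{-2/3} ∑_{1 ≤ x₄ < x₁, x₄ ≡ x₁ (mod 2)}
x₄^{-2/3}·((x₁+x₄)/2)^{-2/3} ≤ C·log N for all N ≥ 2. -/
theorem stmt10 : ∃ C > (0:ℝ), ∀ N : ℕ, 2 ≤ N →
    ∑ x₁ ∈ Finset.Icc 3 N, (x₁ : ℝ) ^ (-(2:ℝ)/3) *
      ∑ x₄ ∈ (Finset.Icc 1 (x₁ - 1)).filter (fun x₄ => x₄ % 2 = x₁ % 2),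
        (x₄ : ℝ) ^ (-(2:ℝ)/3) * (((x₁ : ℝ) + (x₄ : ℝ)) / 2) ^ (-(2:ℝ)/3)
      ≤ C * Real.log N := by
  set C : ℝ := 3 * 2 ^ ((2:ℝ)/3)
  refine ⟨C, by positivity, fun N _ => ?_⟩
  have term_le (x : ℕ) (hx : x ∈ Icc 3 N) : (x : ℝ) ^ (-(2:ℝ)/3) *
      ∑ y ∈ (Icc 1 (x - 1)).filter (fun y => y % 2 = x % 2),
        (y : ℝ) ^ (-(2:ℝ)/3) * (((x : ℝ) + y) / 2) ^ (-(2:ℝ)/3) ≤ C * (x : ℝ)⁻¹ := by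
    have hx0 : (0 : ℝ) < x := Nat.cast_pos.mpr (by linarith [(mem_Icc.mp hx).1])
    calc _ ≤ (x : ℝ) ^ (-(2:ℝ)/3) *
          ∑ y ∈ Icc 1 (x - 1), (y : ℝ) ^ (-(2:ℝ)/3) * (((x : ℝ) + y) / 2) ^ (-(2:ℝ)/3) := by
          gcongr
          exact filter_subset _ _
      _ ≤ (x : ℝ) ^ (-(2:ℝ)/3) * (C * (x : ℝ) ^ (-(1:ℝ)/3)) := by
          gcongr
          exact sum_Icc_rpow_mul_half_add_rpow_le x
      _ = C * (x : ℝ)⁻¹ := by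
          rw [mul_left_comm, ← rpow_add hx0, ← rpow_neg_one]
          norm_num
  calc _ ≤ ∑ x ∈ Icc 3 N, C * (x : ℝ)⁻¹ := sum_le_sum term_le
    _ ≤ ∑ x ∈ Icc 2 N, C * (x : ℝ)⁻¹ :=
        sum_le_sum_of_subset_of_nonneg (Icc_subset_Icc_left (by norm_num))
          fun _ _ _ => by positivity
    _ ≤ C * log N := by
        rw [← mul_sum]
        gcongr
        exact sum_Icc_two_inv_le_log N
end

section
/- There is a constant C > 0 such that for every positive integer x₀ and every N ≥ x₀, ∑ over triples (x₂, x₃, x₄) of positive integers with x₀ + x₂ = x₃ + x₄, x₀ < x₂ ≤ N, and x₃ < x₄, of x₂^{-2/3}·x₃^{-2/3}·x₄^{-2/3}, is at most C·log N. -/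
/-!
Fix `x₂ = a`. Since `x₃ < x₄` and `x₃ + x₄ = x₀ + a > a`, we have `x₄ > a / 2`, so
`x₄ ^ (-2/3) ≤ 2 ^ (2/3) * a ^ (-2/3)`; moreover `x₃ ≤ x₀ + a ≤ 2a` determines `x₄`. Hence the
terms with `x₂ = a` add up to at most `2 ^ (2/3) * a ^ (-4/3) * ∑_{b ≤ 2a} b ^ (-2/3) ≤ 6 / a`,
by comparing `∑ b ^ (s - 1)` with `M ^ s / s` through concavity of `x ↦ x ^ s`. Summing `6 / a`
over `1 < a ≤ N` gives `6 log N`.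
-/

open Finset Real

lemma rpow_le_two_rpow_neg_mul_rpow {x y p : ℝ} (hx : 0 < x) (hxy : x ≤ 2 * y) (hp : p ≤ 0) :
    y ^ p ≤ 2 ^ (-p) * x ^ p := by
  calc y ^ p ≤ (x / 2) ^ p := rpow_le_rpow_of_nonpos (by positivity) (by linarith) hp
    _ = 2 ^ (-p) * x ^ p := by
      rw [div_rpow hx.le zero_le_two, rpow_neg zero_le_two, div_eq_inv_mul]

lemma mul_rpow_sub_one_le_rpow_sub_rpow {a s : ℝ} (ha : 0 ≤ a) (hs₀ : 0 ≤ s) (hs₁ : s ≤ 1) :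
    s * (a + 1) ^ (s - 1) ≤ (a + 1) ^ s - a ^ s := by
  have ha₁ : 0 < a + 1 := by linarith
  have hpos : 0 < (a + 1) ^ s := rpow_pos_of_pos ha₁ s
  -- Bernoulli's inequality for the concave power `x ↦ x ^ s`, at `1 - 1 / (a + 1) = a / (a + 1)`
  have hB := rpow_one_add_le_one_add_mul_self (s := -(a + 1)⁻¹)
    (by rw [neg_le_neg_iff]; exact inv_le_one_of_one_le₀ (by linarith)) hs₀ hs₁
  have hsplit : 1 + -(a + 1)⁻¹ = a / (a + 1) := by field_simp; ring
  rw [hsplit, div_rpow ha ha₁.le, div_le_iff₀ hpos] at hB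
  rw [rpow_sub_one ha₁.ne']
  have : s * ((a + 1) ^ s / (a + 1)) = (a + 1) ^ s * (s * (a + 1)⁻¹) := by ring
  nlinarith

lemma mul_sum_Icc_rpow_sub_one_le {s : ℝ} (hs₀ : 0 ≤ s) (hs₁ : s ≤ 1) (M : ℕ) :
    s * ∑ n ∈ Icc 1 M, (n : ℝ) ^ (s - 1) ≤ (M : ℝ) ^ s := by
  induction M with
  | zero => simp [rpow_nonneg]
  | succ M ih =>
    rw [sum_Icc_succ_top (by omega), mul_add, Nat.cast_succ]
    linarith [mul_rpow_sub_one_le_rpow_sub_rpow (M.cast_nonneg : (0 : ℝ) ≤ M) hs₀ hs₁]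

lemma sum_Ioc_one_inv_le_log (N : ℕ) : ∑ n ∈ Ioc 1 N, (n : ℝ)⁻¹ ≤ log N := by
  rcases N.eq_zero_or_pos with rfl | hN
  · simp
  have h := harmonic_le_one_add_log N
  rw [harmonic_eq_sum_Icc, ← add_sum_Ioc_eq_sum_Icc hN] at h
  push_cast at h
  linarith

lemma sum_rpow_triple_le_of_fst_eq {x₀ a : ℕ} (ha : x₀ < a) (S : Finset (ℕ × ℕ × ℕ))
    (hS : ∀ t ∈ S, t.1 = a ∧ 1 ≤ t.2.1 ∧ x₀ + t.1 = t.2.1 + t.2.2 ∧ t.2.1 < t.2.2) :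
    ∑ t ∈ S, (t.1 : ℝ) ^ (-(2:ℝ)/3) * (t.2.1 : ℝ) ^ (-(2:ℝ)/3) * (t.2.2 : ℝ) ^ (-(2:ℝ)/3)
      ≤ 6 * (a : ℝ)⁻¹ := by
  set p : ℝ := -(2:ℝ)/3
  have ha₀ : (0 : ℝ) < a := by exact_mod_cast (by omega : 0 < a)
  set K : ℝ := 2 ^ (-p) * (a : ℝ) ^ p * (a : ℝ) ^ p
  have hK : 0 ≤ K := by positivity
  have hpoint : ∀ t ∈ S,
      (t.1 : ℝ) ^ p * (t.2.1 : ℝ) ^ p * (t.2.2 : ℝ) ^ p ≤ K * (t.2.1 : ℝ) ^ p := by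
    intro t ht
    obtain ⟨rfl, -, hsum, hlt⟩ := hS t ht
    have h₄ := rpow_le_two_rpow_neg_mul_rpow ha₀ (y := t.2.2) (p := p)
      (by exact_mod_cast (by omega : t.1 ≤ 2 * t.2.2)) (by norm_num [p])
    calc (t.1 : ℝ) ^ p * (t.2.1 : ℝ) ^ p * (t.2.2 : ℝ) ^ p
        ≤ (t.1 : ℝ) ^ p * (t.2.1 : ℝ) ^ p * (2 ^ (-p) * (t.1 : ℝ) ^ p) := by gcongr
      _ = K * (t.2.1 : ℝ) ^ p := by ring
  have hinj : Set.InjOn (fun t : ℕ × ℕ × ℕ => t.2.1) S := by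
    intro t ht t' ht' h
    obtain ⟨h₁, -, h₂, -⟩ := hS t ht
    obtain ⟨h₁', -, h₂', -⟩ := hS t' ht'
    simp only at h
    ext <;> omega
  have hsub : S.image (fun t => t.2.1) ⊆ Icc 1 (2 * a) := by
    intro b hb
    obtain ⟨t, ht, rfl⟩ := mem_image.1 hb
    obtain ⟨h₁, h₂, h₃, -⟩ := hS t ht
    exact mem_Icc.2 ⟨h₂, by omega⟩
  have hpow := mul_sum_Icc_rpow_sub_one_le (s := 1 / 3) (by norm_num) (by norm_num) (2 * a)
  rw [show (1 : ℝ) / 3 - 1 = p by norm_num [p]] at hpow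
  have hconst : K * (((2 * a : ℕ) : ℝ) ^ ((1 : ℝ) / 3)) = 2 * (a : ℝ)⁻¹ := by
    push_cast
    rw [mul_rpow zero_le_two ha₀.le]
    calc K * (2 ^ ((1 : ℝ) / 3) * (a : ℝ) ^ ((1 : ℝ) / 3))
        = 2 ^ (-p + 1 / 3) * (a : ℝ) ^ (p + p + 1 / 3) := by
          rw [rpow_add zero_lt_two, rpow_add ha₀, rpow_add ha₀]; ring
      _ = 2 * (a : ℝ)⁻¹ := by norm_num [p, rpow_neg_one]
  calc ∑ t ∈ S, (t.1 : ℝ) ^ p * (t.2.1 : ℝ) ^ p * (t.2.2 : ℝ) ^ p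
      ≤ ∑ t ∈ S, K * (t.2.1 : ℝ) ^ p := sum_le_sum hpoint
    _ = K * ∑ b ∈ S.image (fun t => t.2.1), ((b : ℕ) : ℝ) ^ p := by rw [sum_image hinj, mul_sum]
    _ ≤ K * ∑ b ∈ Icc 1 (2 * a), (b : ℝ) ^ p :=
      mul_le_mul_of_nonneg_left (sum_le_sum_of_subset_of_nonneg hsub fun _ _ _ => by positivity) hK
    _ ≤ K * (3 * ((2 * a : ℕ) : ℝ) ^ ((1 : ℝ) / 3)) := by gcongr; linarith
    _ = 6 * (a : ℝ)⁻¹ := by linear_combination 3 * hconst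

/-- There is C > 0 such that for every x₀ ≥ 1 and N ≥ x₀, the sum over
triples (x₂,x₃,x₄) of positive integers with x₀ + x₂ = x₃ + x₄, x₀ < x₂ ≤ N, x₃ < x₄,
of x₂^{-2/3}·x₃^{-2/3}·x₄^{-2/3} is at most C·log N. -/
theorem stmt11 : ∃ C > (0:ℝ), ∀ x₀ N : ℕ, 1 ≤ x₀ → x₀ ≤ N →
    ∑ t ∈ (Finset.Icc 1 (2*N) ×ˢ Finset.Icc 1 (2*N) ×ˢ Finset.Icc 1 (2*N)).filter
        (fun t => x₀ + t.1 = t.2.1 + t.2.2 ∧ x₀ < t.1 ∧ t.1 ≤ N ∧ t.2.1 < t.2.2),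
      (t.1 : ℝ) ^ (-(2:ℝ)/3) * (t.2.1 : ℝ) ^ (-(2:ℝ)/3) * (t.2.2 : ℝ) ^ (-(2:ℝ)/3)
      ≤ C * Real.log N := by
  refine ⟨6, by norm_num, fun x₀ N hx₀ _ => ?_⟩
  rw [← sum_fiberwise_of_maps_to (g := Prod.fst) (t := Ioc x₀ N) fun t ht => by
    simp only [mem_filter] at ht; exact mem_Ioc.2 ⟨ht.2.2.1, ht.2.2.2.1⟩]
  calc _ ≤ ∑ a ∈ Ioc x₀ N, 6 * (a : ℝ)⁻¹ := sum_le_sum fun a ha =>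
        sum_rpow_triple_le_of_fst_eq (mem_Ioc.1 ha).1 _ fun t ht => by
          simp only [mem_filter, mem_product, mem_Icc] at ht
          omega
    _ ≤ ∑ a ∈ Ioc 1 N, 6 * (a : ℝ)⁻¹ :=
        sum_le_sum_of_subset_of_nonneg (Ioc_subset_Ioc_left hx₀) fun a _ _ => by positivity
    _ ≤ 6 * log N := by rw [← mul_sum]; gcongr; exact sum_Ioc_one_inv_le_log N
end
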